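/- Let F(z) = a₋₁ z^{−α} + a₀ + Σ_{i=1}^N a_i z^{α_i} with α ∈ (0,1), 0 < α₁ < ⋯ < α_N, nonnegative coefficients bounded above by a^*, and set s = α_N + 2. Then for all x, y ∈ ℝ^d: |F(|x|)x − F(|y|)y| ≤ C₁ (1 + |x| + |y|)^{s−2+α} |x − y|^{1−α}, where C₁ = 2(s−1)/(1−α) times a constant depending only on N and a^*. -/

import Mathlib

/-!
Split `F(|x|) x - F(|y|) y` into the contributions of the monomials. For `p ≥ 0` the map
`z ↦ |z|^p z` is Lipschitz on balls with constant `(1 + p) max(|x|, |y|)^p`, by the tangent-line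
inequality for `u ↦ u^(1+p)`; such a Lipschitz bound turns into a Hölder bound through
`|x - y| ≤ M^α |x - y|^(1-α)` with `M = 1 + |x| + |y|`. The singular term `z ↦ |z|^(-α) z` is
globally `(1 - α)`-Hölder with constant `2`: if `|x - y| ≥ |x| ≥ |y|` both values are at most
`|x - y|^(1-α)` in norm; otherwise write the difference as
`|x|^(-α) (x - y) + (|x|^(-α) - |y|^(-α)) y` and control the second part by weighted AM-GM.
-/

open Real

lemma rpow_neg_mul_self {t α : ℝ} (ht : 0 ≤ t) (hα : α ≠ 1) : t ^ (-α) * t = t ^ (1 - α) := by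
  rw [← rpow_add_one' ht (by contrapose! hα; linarith)]
  ring_nf

lemma abs_rpow_neg_sub_rpow_neg_mul_le {α t r : ℝ} (hα0 : 0 < α) (hα1 : α < 1)
    (ht : 0 ≤ t) (htr : t ≤ r) : |r ^ (-α) - t ^ (-α)| * t ≤ (r - t) ^ (1 - α) := by
  rcases ht.eq_or_lt with rfl | ht
  · simpa using rpow_nonneg (sub_nonneg.2 htr) _
  have hr : 0 < r := ht.trans_le htr
  have hu : 0 ≤ r - t := sub_nonneg.2 htr
  rw [abs_sub_comm, abs_of_nonneg (sub_nonneg.2 (rpow_le_rpow_of_nonpos ht htr (by linarith))),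
    sub_mul, rpow_neg_mul_self ht.le hα1.ne]
  have hratio : t ^ (1 - α) * (t / r) ≤ r ^ (-α) * t := by
    have h := self_le_rpow_of_le_one (div_pos ht hr).le (div_le_one_of_le₀ htr hr.le) hα1.le
    calc t ^ (1 - α) * (t / r) ≤ t ^ (1 - α) * (t / r) ^ α := by gcongr
      _ = r ^ (-α) * t := by
        rw [div_rpow ht.le hr.le, ← rpow_neg_mul_self ht.le hα1.ne, rpow_neg ht.le, rpow_neg hr.le]
        field_simp
  have hamgm : t ^ (1 - α) * (r - t) ^ α ≤ r := by
    have := geom_mean_le_arith_mean2_weighted (w₁ := 1 - α) (w₂ := α) (p₁ := t) (p₂ := r - t)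
      (by linarith) hα0.le ht.le hu (by ring)
    nlinarith
  calc t ^ (1 - α) - r ^ (-α) * t ≤ t ^ (1 - α) - t ^ (1 - α) * (t / r) := by linarith
    _ = t ^ (1 - α) * (r - t) ^ α * (r - t) ^ (1 - α) / r := by
      rw [mul_assoc, ← rpow_add' hu (by norm_num), add_sub_cancel, rpow_one]; field_simp
    _ ≤ (r - t) ^ (1 - α) := by
      rw [div_le_iff₀ hr, mul_comm _ r]; gcongr

lemma abs_rpow_sub_rpow_mul_le {e t r : ℝ} (he : 0 ≤ e) (ht : 0 ≤ t) (htr : t ≤ r) :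
    |r ^ e - t ^ e| * t ≤ e * r ^ e * (r - t) := by
  rcases (ht.trans htr).eq_or_lt with rfl | hr
  · obtain rfl : t = 0 := le_antisymm htr ht
    simp
  rw [abs_of_nonneg (sub_nonneg.2 (rpow_le_rpow ht htr he))]
  -- tangent line of the convex function `u ↦ u ^ (1 + e)` at `r`
  have htangent : r ^ e * r + (1 + e) * r ^ e * (t - r) ≤ t ^ e * t := by
    have h := one_add_mul_self_le_rpow_one_add (s := t / r - 1)
      (by linarith [div_nonneg ht hr.le]) (p := 1 + e) (by linarith)
    rw [add_sub_cancel, div_rpow ht hr.le, rpow_add' ht (by linarith),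
      rpow_add' hr.le (by linarith), rpow_one, rpow_one] at h
    rw [le_div_iff₀ (by positivity)] at h
    calc r ^ e * r + (1 + e) * r ^ e * (t - r) = (1 + (1 + e) * (t / r - 1)) * (r * r ^ e) := by
          field_simp
      _ ≤ t ^ e * t := by linarith
  linarith

lemma le_rpow_mul_rpow_one_sub {α D M : ℝ} (hα : 0 ≤ α) (hD : 0 ≤ D) (hDM : D ≤ M) :
    D ≤ M ^ α * D ^ (1 - α) :=
  calc D = D ^ α * D ^ (1 - α) := by rw [← rpow_add' hD (by norm_num)]; simp
    _ ≤ M ^ α * D ^ (1 - α) := by gcongr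

variable {E : Type*} [NormedAddCommGroup E] [NormedSpace ℝ E]

lemma norm_smul_sub_smul_le (a b : ℝ) (x y : E) :
    ‖a • x - b • y‖ ≤ |a| * ‖x - y‖ + |a - b| * ‖y‖ := by
  calc ‖a • x - b • y‖ = ‖a • (x - y) + (a - b) • y‖ := by
        rw [smul_sub, sub_smul]; abel_nf
    _ ≤ |a| * ‖x - y‖ + |a - b| * ‖y‖ := by
        simpa only [norm_smul, Real.norm_eq_abs] using norm_add_le (a • (x - y)) ((a - b) • y)

lemma norm_rpow_smul_sub_rpow_smul_le {e : ℝ} (he : 0 ≤ e) (x y : E) :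
    ‖‖x‖ ^ e • x - ‖y‖ ^ e • y‖ ≤ (1 + e) * max ‖x‖ ‖y‖ ^ e * ‖x - y‖ := by
  wlog hyx : ‖y‖ ≤ ‖x‖ generalizing x y
  · simpa only [norm_sub_rev, max_comm] using this y x (le_of_not_ge hyx)
  have hdiff := abs_rpow_sub_rpow_mul_le he (norm_nonneg y) hyx
  rw [max_eq_left hyx]
  refine (norm_smul_sub_smul_le _ _ x y).trans ?_
  rw [abs_of_nonneg (by positivity)]
  have : e * ‖x‖ ^ e * (‖x‖ - ‖y‖) ≤ e * ‖x‖ ^ e * ‖x - y‖ := by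
    gcongr; exact norm_sub_norm_le x y
  linarith

lemma norm_rpow_neg_smul_self (α : ℝ) (hα : α ≠ 1) (x : E) : ‖‖x‖ ^ (-α) • x‖ = ‖x‖ ^ (1 - α) := by
  rw [norm_smul, norm_of_nonneg (by positivity), rpow_neg_mul_self (norm_nonneg x) hα]

lemma norm_rpow_neg_smul_sub_rpow_neg_smul_le {α : ℝ} (hα0 : 0 < α) (hα1 : α < 1) (x y : E) :
    ‖‖x‖ ^ (-α) • x - ‖y‖ ^ (-α) • y‖ ≤ 2 * ‖x - y‖ ^ (1 - α) := by
  wlog hyx : ‖y‖ ≤ ‖x‖ generalizing x y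
  · simpa only [norm_sub_rev] using this y x (le_of_not_ge hyx)
  rcases eq_or_ne x y with rfl | hxy
  · simp only [sub_self, norm_zero]; positivity
  have hD : 0 < ‖x - y‖ := norm_pos_iff.2 (sub_ne_zero.2 hxy)
  rcases le_or_gt ‖x‖ ‖x - y‖ with hfar | hnear
  · calc ‖‖x‖ ^ (-α) • x - ‖y‖ ^ (-α) • y‖ ≤ ‖x‖ ^ (1 - α) + ‖y‖ ^ (1 - α) := by
          simpa only [norm_rpow_neg_smul_self α hα1.ne]
            using norm_sub_le (‖x‖ ^ (-α) • x) (‖y‖ ^ (-α) • y)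
      _ ≤ 2 * ‖x - y‖ ^ (1 - α) := by
          have := rpow_le_rpow (norm_nonneg x) hfar (by linarith : 0 ≤ 1 - α)
          have := rpow_le_rpow (norm_nonneg y) (hyx.trans hfar) (by linarith : 0 ≤ 1 - α)
          linarith
  · refine (norm_smul_sub_smul_le _ _ x y).trans ?_
    have hfirst : |‖x‖ ^ (-α)| * ‖x - y‖ ≤ ‖x - y‖ ^ (1 - α) := by
      rw [abs_of_nonneg (by positivity), ← rpow_neg_mul_self (norm_nonneg _) hα1.ne]
      exact mul_le_mul_of_nonneg_right (rpow_le_rpow_of_nonpos hD hnear.le (by linarith))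
        (norm_nonneg _)
    have hsecond : |‖x‖ ^ (-α) - ‖y‖ ^ (-α)| * ‖y‖ ≤ ‖x - y‖ ^ (1 - α) :=
      (abs_rpow_neg_sub_rpow_neg_mul_le hα0 hα1 (norm_nonneg y) hyx).trans
        (by gcongr; exact norm_sub_norm_le x y)
    linarith

lemma norm_rpow_smul_sub_rpow_smul_le_holder {p α : ℝ} (hp : 0 ≤ p) (hα : 0 ≤ α) (x y : E) :
    ‖‖x‖ ^ p • x - ‖y‖ ^ p • y‖ ≤
      (1 + p) * (1 + ‖x‖ + ‖y‖) ^ (p + α) * ‖x - y‖ ^ (1 - α) := by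
  have hM : 0 < 1 + ‖x‖ + ‖y‖ := by positivity
  have hmax : max ‖x‖ ‖y‖ ≤ 1 + ‖x‖ + ‖y‖ :=
    max_le (by linarith [norm_nonneg y]) (by linarith [norm_nonneg x])
  have hDM : ‖x - y‖ ≤ 1 + ‖x‖ + ‖y‖ := by linarith [norm_sub_le x y]
  calc _ ≤ (1 + p) * max ‖x‖ ‖y‖ ^ p * ‖x - y‖ := norm_rpow_smul_sub_rpow_smul_le hp x y
    _ ≤ (1 + p) * (1 + ‖x‖ + ‖y‖) ^ p * ((1 + ‖x‖ + ‖y‖) ^ α * ‖x - y‖ ^ (1 - α)) := by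
      gcongr; exact le_rpow_mul_rpow_one_sub hα (norm_nonneg _) hDM
    _ = (1 + p) * (1 + ‖x‖ + ‖y‖) ^ (p + α) * ‖x - y‖ ^ (1 - α) := by
      rw [rpow_add hM]; ring

lemma norm_rpow_combination_smul_sub_le {ι : Type*} [Fintype ι] (p c b : ℝ) (e a : ι → ℝ)
    (hc : 0 ≤ c) (hb : 0 ≤ b) (ha : ∀ i, 0 ≤ a i) (x y : E) :
    ‖(c * ‖x‖ ^ p + b + ∑ i, a i * ‖x‖ ^ (e i)) • x -
        (c * ‖y‖ ^ p + b + ∑ i, a i * ‖y‖ ^ (e i)) • y‖ ≤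
      c * ‖‖x‖ ^ p • x - ‖y‖ ^ p • y‖ + b * ‖x - y‖ +
        ∑ i, a i * ‖‖x‖ ^ (e i) • x - ‖y‖ ^ (e i) • y‖ := by
  have hsplit : (c * ‖x‖ ^ p + b + ∑ i, a i * ‖x‖ ^ (e i)) • x -
        (c * ‖y‖ ^ p + b + ∑ i, a i * ‖y‖ ^ (e i)) • y =
      c • (‖x‖ ^ p • x - ‖y‖ ^ p • y) + b • (x - y) +
        ∑ i, a i • (‖x‖ ^ (e i) • x - ‖y‖ ^ (e i) • y) := by
    simp only [add_smul, Finset.sum_smul, mul_smul, smul_sub, Finset.sum_sub_distrib]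
    abel
  rw [hsplit]
  refine (norm_add_le _ _).trans (add_le_add ((norm_add_le _ _).trans (le_of_eq ?_))
    ((norm_sum_le _ _).trans (le_of_eq ?_)))
  · rw [norm_smul, norm_smul, norm_of_nonneg hc, norm_of_nonneg hb]
  · exact Finset.sum_congr rfl fun i _ => by rw [norm_smul, norm_of_nonneg (ha i)]

lemma norm_rpow_combination_smul_sub_le_holder {ι : Type*} [Fintype ι] {α q A c b : ℝ}
    {e a : ι → ℝ} (hα0 : 0 < α) (hα1 : α < 1) (hq : 0 ≤ q) (he : ∀ i, 0 ≤ e i ∧ e i ≤ q)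
    (hc : 0 ≤ c ∧ c ≤ A) (hb : 0 ≤ b ∧ b ≤ A) (ha : ∀ i, 0 ≤ a i ∧ a i ≤ A) (x y : E) :
    ‖(c * ‖x‖ ^ (-α) + b + ∑ i, a i * ‖x‖ ^ (e i)) • x -
        (c * ‖y‖ ^ (-α) + b + ∑ i, a i * ‖y‖ ^ (e i)) • y‖ ≤
      A * (3 + Fintype.card ι * (1 + q)) * (1 + ‖x‖ + ‖y‖) ^ (q + α) * ‖x - y‖ ^ (1 - α) := by
  set B := (1 + ‖x‖ + ‖y‖) ^ (q + α) * ‖x - y‖ ^ (1 - α)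
  have hM : 1 ≤ 1 + ‖x‖ + ‖y‖ := by linarith [norm_nonneg x, norm_nonneg y]
  have hB : 0 ≤ B := by positivity
  have hpos : ∀ p, 0 ≤ p → p ≤ q → ‖‖x‖ ^ p • x - ‖y‖ ^ p • y‖ ≤ (1 + p) * B := by
    intro p hp0 hpq
    refine (norm_rpow_smul_sub_rpow_smul_le_holder hp0 hα0.le x y).trans ?_
    rw [mul_assoc]
    gcongr
    exact mul_le_mul_of_nonneg_right (rpow_le_rpow_of_exponent_le hM (by linarith)) (by positivity)
  have hneg : ‖‖x‖ ^ (-α) • x - ‖y‖ ^ (-α) • y‖ ≤ 2 * B := by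
    refine (norm_rpow_neg_smul_sub_rpow_neg_smul_le hα0 hα1 x y).trans ?_
    gcongr
    exact le_mul_of_one_le_left (by positivity) (one_le_rpow hM (by linarith))
  have hid : ‖x - y‖ ≤ B := by simpa using hpos 0 le_rfl hq
  calc _ ≤ c * ‖‖x‖ ^ (-α) • x - ‖y‖ ^ (-α) • y‖ + b * ‖x - y‖ +
        ∑ i, a i * ‖‖x‖ ^ (e i) • x - ‖y‖ ^ (e i) • y‖ :=
        norm_rpow_combination_smul_sub_le _ _ _ e a hc.1 hb.1 (fun i => (ha i).1) x y
    _ ≤ A * (2 * B) + A * B + ∑ _i : ι, A * ((1 + q) * B) := by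
        have hA : 0 ≤ A := hc.1.trans hc.2
        gcongr with i
        exacts [hc.2, hb.2, (ha i).2,
          (hpos _ (he i).1 (he i).2).trans (by gcongr; exact (he i).2)]
    _ = A * (3 + Fintype.card ι * (1 + q)) * B := by
        simp only [Finset.sum_const, Finset.card_univ, nsmul_eq_mul]; ring
    _ = _ := by simp only [B]; ring

theorem stmt10 (d : ℕ) (N : ℕ) (hN : 1 ≤ N)
    (α : ℝ) (hα0 : 0 < α) (hα1 : α < 1)
    (e : Fin N → ℝ) (hmono : StrictMono e) (hepos : ∀ i, 0 < e i)
    (astar asup : ℝ) (hstar : 0 < astar) (hstarsup : astar ≤ asup)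
    (s : ℝ) (hs : s = e ⟨N - 1, by omega⟩ + 2) :
    ∃ K : ℝ, 0 < K ∧
      ∀ (am1 a0 : ℝ) (a : Fin N → ℝ),
        astar ≤ am1 → am1 ≤ asup → astar ≤ a0 → a0 ≤ asup →
        astar ≤ a ⟨N - 1, by omega⟩ → (∀ i, 0 ≤ a i ∧ a i ≤ asup) →
        ∀ x y : EuclideanSpace ℝ (Fin d),
          ‖(am1 * ‖x‖ ^ (-α) + a0 + ∑ i, a i * ‖x‖ ^ (e i)) • x -
              (am1 * ‖y‖ ^ (-α) + a0 + ∑ i, a i * ‖y‖ ^ (e i)) • y‖ ≤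
            2 * (s - 1) / (1 - α) * K * (1 + ‖x‖ + ‖y‖) ^ (s - 2 + α) *
              ‖x - y‖ ^ (1 - α) := by
  have hasup : 0 < asup := hstar.trans_le hstarsup
  have hexp : ∀ i, 0 ≤ e i ∧ e i ≤ s - 2 := fun i => ⟨(hepos i).le, by
    rw [hs, add_sub_cancel_right]; exact hmono.monotone (Fin.le_def.2 (by dsimp; omega))⟩
  have hs1 : 1 ≤ s - 1 := by linarith [hexp ⟨N - 1, by omega⟩, hepos ⟨N - 1, by omega⟩]
  have hconst : asup * (3 + N * (1 + (s - 2))) ≤ 2 * (s - 1) / (1 - α) * ((N + 3) * asup) := by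
    have hfac : s - 1 ≤ 2 * (s - 1) / (1 - α) := by
      rw [le_div_iff₀ (by linarith)]; nlinarith
    calc asup * (3 + N * (1 + (s - 2))) ≤ (s - 1) * ((N + 3) * asup) := by nlinarith
      _ ≤ _ := mul_le_mul_of_nonneg_right hfac (by positivity)
  refine ⟨(N + 3) * asup, by positivity, ?_⟩
  intro am1 a0 a ham1 ham1' ha0 ha0' _ ha x y
  calc _ ≤ asup * (3 + N * (1 + (s - 2))) * (1 + ‖x‖ + ‖y‖) ^ (s - 2 + α) * ‖x - y‖ ^ (1 - α) := by
        simpa only [Fintype.card_fin] using norm_rpow_combination_smul_sub_le_holder hα0 hα1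
          (by linarith) hexp ⟨by linarith, ham1'⟩ ⟨by linarith, ha0'⟩ ha x y
    _ ≤ _ := by gcongr
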